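/- Let α ∈ (0,1), β ≥ 0, r > 0, let d ≥ 1 be an integer and let N ∈ ℕ. Then the function m_{α,β} : ℝ^d → ℂ is infinitely differentiable, and there exists a constant c > 0 such that for every natural number k ≤ N and every λ ∈ ℝ^d, the k-th total (Fréchet) derivative of m_{α,β} at λ satisfies ‖D^k m_{α,β}(λ)‖ ≤ c · (1 + ‖λ‖)^{−β − k(1−α)}. -/

import Mathlib

open Set ContDiff

/-- The oscillating multiplier `m_{α,β}(λ) = (‖λ‖² + r²)^{-β/2} e^{i(‖λ‖² + r²)^{α/2}}`
on `ℝ^d`. -/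
noncomputable def oscMult (α β r : ℝ) (d : ℕ) (lam : EuclideanSpace ℝ (Fin d)) : ℂ :=
  (((‖lam‖ ^ 2 + r ^ 2) ^ (-(β / 2)) : ℝ) : ℂ) *
    Complex.exp (Complex.I * (((‖lam‖ ^ 2 + r ^ 2) ^ (α / 2) : ℝ) : ℂ))

namespace OscAux

noncomputable def oscFun (p q : ℝ) (t : ℝ) : ℂ :=
  ((t ^ p : ℝ) : ℂ) * Complex.exp (Complex.I * ((t ^ q : ℝ) : ℂ))

theorem oscFun_contDiffAt (p q : ℝ) {t : ℝ} (ht : t ≠ 0) : ContDiffAt ℝ ω (oscFun p q) t := by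
  have hof : ContDiff ℝ ω (fun s : ℝ => (s : ℂ)) := Complex.ofRealCLM.contDiff
  have h1 : ContDiffAt ℝ ω (fun s : ℝ => ((s ^ p : ℝ) : ℂ)) t :=
    hof.contDiffAt.comp t (Real.contDiffAt_rpow_const_of_ne ht)
  have h2 : ContDiffAt ℝ ω (fun s : ℝ => Complex.exp (Complex.I * ((s ^ q : ℝ) : ℂ))) t :=
    Complex.contDiff_exp.contDiffAt.comp t
      (contDiffAt_const.mul (hof.contDiffAt.comp t (Real.contDiffAt_rpow_const_of_ne ht)))
  exact h1.mul h2

inductive Rep (q p : ℝ) : ℕ → (ℝ → ℝ → ℂ) → Prop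
  | single (i m : ℕ) (b : ℂ) (hm : m ≤ i) :
      Rep q p i (fun T u => b * ((T ^ (p + m * q) : ℝ) : ℂ) *
        ((u ^ (p - i + m * q) : ℝ) : ℂ) *
        Complex.exp (Complex.I * ((T ^ q : ℝ) : ℂ) * ((u ^ q : ℝ) : ℂ)))
  | add {i : ℕ} {h₁ h₂ : ℝ → ℝ → ℂ} : Rep q p i h₁ → Rep q p i h₂ →
      Rep q p i (fun T u => h₁ T u + h₂ T u)

theorem rep_hasDerivAt {q p : ℝ} {i : ℕ} {h : ℝ → ℝ → ℂ} (hrep : Rep q p i h) :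
    ∃ h', Rep q p (i + 1) h' ∧ ∀ T, 0 < T → ∀ u, 0 < u → HasDerivAt (h T) (h' T u) u := by
  induction hrep with
  | single m b hm =>
      refine ⟨_, Rep.add (Rep.single (i + 1) m (b * ((p - i + m * q : ℝ) : ℂ))
          (hm.trans (Nat.le_succ i)))
        (Rep.single (i + 1) (m + 1) (b * Complex.I * (q : ℂ)) (Nat.succ_le_succ hm)), ?_⟩
      intro T hT u hu
      have h1 : HasDerivAt (fun v : ℝ => ((v ^ (p - i + m * q) : ℝ) : ℂ))
          (((p - i + m * q) * u ^ (p - i + m * q - 1) : ℝ) : ℂ) u :=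
        (Real.hasDerivAt_rpow_const (Or.inl hu.ne')).ofReal_comp
      have h2 : HasDerivAt (fun v : ℝ => ((v ^ q : ℝ) : ℂ)) (((q * u ^ (q - 1) : ℝ)) : ℂ) u :=
        (Real.hasDerivAt_rpow_const (Or.inl hu.ne')).ofReal_comp
      have h3 : HasDerivAt (fun v : ℝ => Complex.I * ((T ^ q : ℝ) : ℂ) * ((v ^ q : ℝ) : ℂ))
          (Complex.I * ((T ^ q : ℝ) : ℂ) * ((q * u ^ (q - 1) : ℝ) : ℂ)) u :=
        h2.const_mul _
      have h4 := h3.cexp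
      have h5 := (h1.const_mul (b * ((T ^ (p + m * q) : ℝ) : ℂ))).mul h4
      have key :
          b * ((p - i + m * q : ℝ) : ℂ) * ((T ^ (p + m * q) : ℝ) : ℂ) *
              ((u ^ (p - (i + 1 : ℕ) + m * q) : ℝ) : ℂ) *
              Complex.exp (Complex.I * ((T ^ q : ℝ) : ℂ) * ((u ^ q : ℝ) : ℂ)) +
            b * Complex.I * (q : ℂ) * ((T ^ (p + (m + 1 : ℕ) * q) : ℝ) : ℂ) *
              ((u ^ (p - (i + 1 : ℕ) + (m + 1 : ℕ) * q) : ℝ) : ℂ) *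
              Complex.exp (Complex.I * ((T ^ q : ℝ) : ℂ) * ((u ^ q : ℝ) : ℂ)) =
          b * ((T ^ (p + m * q) : ℝ) : ℂ) *
              (((p - i + m * q) * u ^ (p - i + m * q - 1) : ℝ) : ℂ) *
              Complex.exp (Complex.I * ((T ^ q : ℝ) : ℂ) * ((u ^ q : ℝ) : ℂ)) +
            b * ((T ^ (p + m * q) : ℝ) : ℂ) * ((u ^ (p - i + m * q) : ℝ) : ℂ) *
              (Complex.exp (Complex.I * ((T ^ q : ℝ) : ℂ) * ((u ^ q : ℝ) : ℂ)) *
                (Complex.I * ((T ^ q : ℝ) : ℂ) * ((q * u ^ (q - 1) : ℝ) : ℂ))) := by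
        push_cast
        simp only [add_mul, one_mul, Real.rpow_add hT, Real.rpow_add hu, Real.rpow_sub hT,
          Real.rpow_sub hu, Real.rpow_one]
        push_cast
        ring
      exact key ▸ h5
  | add hr1 hr2 ih1 ih2 =>
      obtain ⟨g1, hg1, hd1⟩ := ih1
      obtain ⟨g2, hg2, hd2⟩ := ih2
      exact ⟨_, Rep.add hg1 hg2, fun T hT u hu => (hd1 T hT u hu).add (hd2 T hT u hu)⟩

theorem rep_norm_bound {q p r2 : ℝ} (hq : 0 < q) (hr2 : 0 < r2) {i : ℕ} {h : ℝ → ℝ → ℂ}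
    (hrep : Rep q p i h) :
    ∃ C, 0 < C ∧ ∀ T, r2 ≤ T → ‖h T 1‖ ≤ C * T ^ (p + i * q) := by
  induction hrep with
  | single m b hm =>
      refine ⟨(‖b‖ + 1) * max 1 (r2 ^ (((m : ℝ) - i) * q)), by positivity, ?_⟩
      intro T hT
      have hT0 : 0 < T := lt_of_lt_of_le hr2 hT
      have hnorm : ‖b * ((T ^ (p + m * q) : ℝ) : ℂ) * (((1:ℝ) ^ (p - i + m * q) : ℝ) : ℂ) *
          Complex.exp (Complex.I * ((T ^ q : ℝ) : ℂ) * (((1:ℝ) ^ q : ℝ) : ℂ))‖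
          = ‖b‖ * T ^ (p + m * q) := by
        rw [norm_mul, norm_mul, norm_mul]
        rw [Real.one_rpow, Real.one_rpow]
        have h3 : ‖Complex.exp (Complex.I * ((T ^ q : ℝ) : ℂ) * ((1:ℝ) : ℂ))‖ = 1 := by
          rw [Complex.norm_exp]
          simp
        rw [h3, Complex.norm_real, Real.norm_eq_abs, abs_of_nonneg (Real.rpow_nonneg hT0.le _)]
        simp
      rw [show ((fun T u => b * ((T ^ (p + m * q) : ℝ) : ℂ) *
            ((u ^ (p - i + m * q) : ℝ) : ℂ) *
            Complex.exp (Complex.I * ((T ^ q : ℝ) : ℂ) * ((u ^ q : ℝ) : ℂ))) T 1)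
          = b * ((T ^ (p + m * q) : ℝ) : ℂ) * (((1:ℝ) ^ (p - i + m * q) : ℝ) : ℂ) *
            Complex.exp (Complex.I * ((T ^ q : ℝ) : ℂ) * (((1:ℝ) ^ q : ℝ) : ℂ)) from rfl, hnorm]
      have hsplit : T ^ (p + (m:ℝ) * q) = T ^ (p + (i:ℝ) * q) * T ^ (((m:ℝ) - i) * q) := by
        rw [← Real.rpow_add hT0]; ring_nf
      have ha : ((m : ℝ) - i) * q ≤ 0 :=
        mul_nonpos_iff.mpr (Or.inr ⟨sub_nonpos.mpr (Nat.cast_le.mpr hm), hq.le⟩)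
      have hKb : T ^ (((m:ℝ) - i) * q) ≤ max 1 (r2 ^ (((m : ℝ) - i) * q)) := by
        rcases le_or_gt 1 T with h1 | h1
        · exact le_max_of_le_left (Real.rpow_le_one_of_one_le_of_nonpos h1 ha)
        · exact le_max_of_le_right (Real.rpow_le_rpow_of_nonpos hr2 hT ha)
      calc ‖b‖ * T ^ (p + (m:ℝ) * q)
          = (‖b‖ * T ^ (((m:ℝ) - i) * q)) * T ^ (p + (i:ℝ) * q) := by rw [hsplit]; ring
        _ ≤ ((‖b‖ + 1) * max 1 (r2 ^ (((m : ℝ) - i) * q))) * T ^ (p + (i:ℝ) * q) := by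
            have h4 : (0:ℝ) ≤ T ^ (p + (i:ℝ) * q) := Real.rpow_nonneg hT0.le _
            have h5 : ‖b‖ * T ^ (((m:ℝ) - i) * q)
                ≤ (‖b‖ + 1) * max 1 (r2 ^ (((m : ℝ) - i) * q)) := by
              have := norm_nonneg b
              have h6 : (0:ℝ) ≤ T ^ (((m:ℝ) - i) * q) := Real.rpow_nonneg hT0.le _
              nlinarith [le_max_left (1:ℝ) (r2 ^ (((m : ℝ) - i) * q))]
            exact mul_le_mul_of_nonneg_right h5 h4
  | add hr1 hr2' ih1 ih2 =>
      obtain ⟨C1, hC1, hb1⟩ := ih1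
      obtain ⟨C2, hC2, hb2⟩ := ih2
      refine ⟨C1 + C2, by positivity, ?_⟩
      intro T hT
      calc ‖_ + _‖ ≤ ‖_‖ + ‖_‖ := norm_add_le _ _
        _ ≤ C1 * T ^ (p + i * q) + C2 * T ^ (p + i * q) := add_le_add (hb1 T hT) (hb2 T hT)
        _ = (C1 + C2) * T ^ (p + i * q) := by ring

theorem rep_iter {q p : ℝ} (i : ℕ) :
    ∃ h, Rep q p i h ∧ ∀ T, 0 < T → ∀ u, 0 < u →
      iteratedDerivWithin i (fun v => oscFun p q (T * v)) (Ioi 0) u = h T u := by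
  induction i with
  | zero =>
      refine ⟨_, Rep.single 0 0 1 le_rfl, ?_⟩
      intro T hT u hu
      rw [iteratedDerivWithin_zero]
      show oscFun p q (T * u) = _
      simp only [Nat.cast_zero, zero_mul, add_zero, sub_zero, one_mul, Nat.cast_ofNat]
      rw [oscFun, Real.mul_rpow hT.le hu.le, Real.mul_rpow hT.le hu.le]
      push_cast
      ring_nf
  | succ i ih =>
      obtain ⟨h, hrep, heq⟩ := ih
      obtain ⟨h', hrep', hd⟩ := rep_hasDerivAt hrep
      refine ⟨h', hrep', ?_⟩
      intro T hT u hu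
      have hmem : u ∈ Ioi (0:ℝ) := hu
      rw [iteratedDerivWithin_succ]
      have hev : iteratedDerivWithin i (fun v => oscFun p q (T * v)) (Ioi 0) =ᶠ[nhds u] h T :=
        Filter.eventually_of_mem (isOpen_Ioi.mem_nhds hmem) (fun v hv => heq T hT v hv)
      exact ((hd T hT u hu).congr_of_eventuallyEq hev).hasDerivWithinAt.derivWithin
        (isOpen_Ioi.uniqueDiffWithinAt hmem)

theorem oneD {q : ℝ} (hq : 0 < q) (p : ℝ) {r2 : ℝ} (hr2 : 0 < r2) (i : ℕ) :
    ∃ C, 0 < C ∧ ∀ T, r2 ≤ T →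
      ‖iteratedFDerivWithin ℝ i (fun u => oscFun p q (T * u)) (Ioi 0) 1‖
        ≤ C * T ^ (p + i * q) := by
  obtain ⟨h, hrep, heq⟩ := rep_iter (q := q) (p := p) i
  obtain ⟨C, hC, hbd⟩ := rep_norm_bound hq hr2 hrep
  refine ⟨C, hC, ?_⟩
  intro T hT
  rw [norm_iteratedFDerivWithin_eq_norm_iteratedDerivWithin,
    heq T (lt_of_lt_of_le hr2 hT) 1 one_pos]
  exact hbd T hT


noncomputable def quadL (T : ℝ) (d : ℕ) :
    EuclideanSpace ℝ (Fin d) →L[ℝ] (EuclideanSpace ℝ (Fin d) →L[ℝ] ℝ) :=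
  (2 / T) • (innerSL ℝ)

theorem fderiv_quad {d : ℕ} (T s : ℝ) :
    fderiv ℝ (fun x : EuclideanSpace ℝ (Fin d) => (1 / T) * (‖x‖ ^ 2 + s))
      = fun x => quadL T d x := by
  funext x
  have h : HasFDerivAt (fun x : EuclideanSpace ℝ (Fin d) => (1 / T) * (‖x‖ ^ 2 + s))
      ((1 / T) • (2 • innerSL ℝ x)) x :=
    (((hasStrictFDerivAt_norm_sq x).hasFDerivAt).add_const s).const_mul (1 / T)
  rw [h.fderiv]
  ext y
  simp only [quadL, ContinuousLinearMap.smul_apply, smul_eq_mul, two_smul,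
    ContinuousLinearMap.add_apply]
  ring

theorem quad_iter_one {d : ℕ} (T s : ℝ) (x : EuclideanSpace ℝ (Fin d)) :
    ‖iteratedFDeriv ℝ 1 (fun y : EuclideanSpace ℝ (Fin d) => (1 / T) * (‖y‖ ^ 2 + s)) x‖
      = |2 / T| * ‖x‖ := by
  rw [← norm_iteratedFDeriv_fderiv, norm_iteratedFDeriv_zero, fderiv_quad T s]
  show ‖(2 / T) • innerSL ℝ x‖ = _
  rw [norm_smul (2 / T) (innerSL ℝ x), innerSL_apply_norm, Real.norm_eq_abs]

theorem quad_iter_two {d : ℕ} (T s : ℝ) (hT : 0 < T) (x : EuclideanSpace ℝ (Fin d)) :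
    ‖iteratedFDeriv ℝ 2 (fun y : EuclideanSpace ℝ (Fin d) => (1 / T) * (‖y‖ ^ 2 + s)) x‖
      ≤ 2 / T := by
  rw [show (2 : ℕ) = 1 + 1 from rfl, ← norm_iteratedFDeriv_fderiv, fderiv_quad T s,
    ← norm_iteratedFDeriv_fderiv, norm_iteratedFDeriv_zero]
  have h1 : fderiv ℝ (fun x => quadL T d x) x = quadL T d := (quadL T d).fderiv
  rw [h1]
  refine ContinuousLinearMap.opNorm_le_bound _ (by positivity) fun y => ?_
  show ‖(2 / T) • innerSL ℝ y‖ ≤ _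
  rw [norm_smul (2 / T) (innerSL ℝ y), innerSL_apply_norm]
  rw [Real.norm_eq_abs, abs_of_nonneg (by positivity : (0:ℝ) ≤ 2 / T)]

theorem quad_iter_ge3 {d : ℕ} (T s : ℝ) (j : ℕ) (x : EuclideanSpace ℝ (Fin d)) :
    ‖iteratedFDeriv ℝ (j + 3) (fun y : EuclideanSpace ℝ (Fin d) => (1 / T) * (‖y‖ ^ 2 + s)) x‖
      = 0 := by
  rw [show j + 3 = (j + 2) + 1 from rfl, ← norm_iteratedFDeriv_fderiv, fderiv_quad T s,
    show j + 2 = (j + 1) + 1 from rfl, ← norm_iteratedFDeriv_fderiv]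
  have h1 : fderiv ℝ (fun x => quadL T d x) = fun _ => quadL T d :=
    funext fun y => (quadL T d).fderiv
  rw [h1, iteratedFDeriv_const_of_ne (Nat.succ_ne_zero j)]
  simp

end OscAux

set_option maxHeartbeats 1000000 in
/-- The derivative estimates (in2) on `ℝ^d`: `m_{α,β}` is smooth and for all `k ≤ N`,
`‖D^k m_{α,β}(λ)‖ ≤ c (1 + ‖λ‖)^{-β - k(1-α)}`. -/
theorem stmt_8 (α β r : ℝ) (hα : α ∈ Set.Ioo (0 : ℝ) 1) (hβ : 0 ≤ β) (hr : 0 < r)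
    (d : ℕ) (hd : 1 ≤ d) (N : ℕ) :
    ContDiff ℝ (⊤ : ℕ∞) (oscMult α β r d) ∧
    ∃ c > (0 : ℝ), ∀ k : ℕ, k ≤ N → ∀ lam : EuclideanSpace ℝ (Fin d),
      ‖iteratedFDeriv ℝ k (oscMult α β r d) lam‖ ≤
        c * (1 + ‖lam‖) ^ (-β - k * (1 - α)) := by
  obtain ⟨hα0, hα1⟩ := hα
  have hq : 0 < α / 2 := by linarith
  have hr2 : 0 < r ^ 2 := by positivity
  have hsm : ContDiff ℝ (⊤ : ℕ∞) (oscMult α β r d) := by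
    rw [contDiff_iff_contDiffAt]
    intro x
    have hnorm : ContDiffAt ℝ ω (fun y : EuclideanSpace ℝ (Fin d) => ‖y‖ ^ 2 + r ^ 2) x :=
      ((contDiff_norm_sq ℝ).add contDiff_const).contDiffAt
    have h0 : ‖x‖ ^ 2 + r ^ 2 ≠ 0 := by positivity
    exact ((OscAux.oscFun_contDiffAt (-(β / 2)) (α / 2) h0).comp x hnorm).of_le le_top
  refine ⟨hsm, ?_⟩
  choose Cf hCfpos hCfbd using fun i => OscAux.oneD hq (-(β / 2)) hr2 i
  set CN : ℝ := ∑ j ∈ Finset.range (N + 1), Cf j with hCN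
  have hCNpos : 0 < CN :=
    Finset.sum_pos (fun j _ => hCfpos j) ⟨0, Finset.mem_range.mpr (Nat.succ_pos N)⟩
  have hCf_le : ∀ i, i ≤ N → Cf i ≤ CN := fun i hi =>
    Finset.single_le_sum (fun j _ => (hCfpos j).le) (Finset.mem_range.mpr (Nat.lt_succ_of_le hi))
  set K : ℝ := max 1 ((r ^ 2) ^ (-(N : ℝ) * (α / 2))) with hK
  have hK1 : (1 : ℝ) ≤ K := le_max_left _ _
  have hKpos : (0 : ℝ) < K := lt_of_lt_of_le one_pos hK1
  set c0 : ℝ := min 1 (r ^ 2) / 2 with hc0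
  have hc0pos : 0 < c0 := div_pos (lt_min one_pos hr2) two_pos
  set cf : ℕ → ℝ := fun k => (k.factorial : ℝ) * CN * K * 2 ^ k *
      c0 ^ (-(β / 2) + (k : ℝ) * (α / 2) + -(1 / 2 : ℝ) * k) with hcf
  have hcfpos : ∀ k, 0 < cf k := fun k => by
    have h1 : (0 : ℝ) < (k.factorial : ℝ) := Nat.cast_pos.mpr k.factorial_pos
    have h2 := Real.rpow_pos_of_pos hc0pos (-(β / 2) + (k : ℝ) * (α / 2) + -(1 / 2 : ℝ) * k)
    rw [hcf]
    positivity
  refine ⟨∑ j ∈ Finset.range (N + 1), cf j,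
    Finset.sum_pos (fun j _ => hcfpos j) ⟨0, Finset.mem_range.mpr (Nat.succ_pos N)⟩, ?_⟩
  intro k hk lam
  have hT0 : (0 : ℝ) < ‖lam‖ ^ 2 + r ^ 2 :=
    add_pos_of_nonneg_of_pos (by positivity) (by positivity)
  set T : ℝ := ‖lam‖ ^ 2 + r ^ 2 with hTdef
  have hrT : r ^ 2 ≤ T := le_add_of_nonneg_left (by positivity)
  set g : ℝ → ℂ := fun u => OscAux.oscFun (-(β / 2)) (α / 2) (T * u) with hg
  set f : EuclideanSpace ℝ (Fin d) → ℝ := fun x => (1 / T) * (‖x‖ ^ 2 + r ^ 2) with hfdef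
  have hcomp : g ∘ f = oscMult α β r d := by
    funext x
    show OscAux.oscFun (-(β / 2)) (α / 2) (T * ((1 / T) * (‖x‖ ^ 2 + r ^ 2))) = _
    rw [show T * ((1 / T) * (‖x‖ ^ 2 + r ^ 2)) = ‖x‖ ^ 2 + r ^ 2 by
      field_simp]
    rfl
  have hflam : f lam = 1 := by
    show (1 / T) * (‖lam‖ ^ 2 + r ^ 2) = 1
    rw [← hTdef]
    field_simp
  have hgc : ContDiffOn ℝ ω g (Ioi 0) := by
    intro u hu
    have hTu : T * u ≠ 0 := (mul_pos hT0 hu).ne'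
    exact ((OscAux.oscFun_contDiffAt _ _ hTu).comp u
      (contDiffAt_const.mul contDiffAt_id)).contDiffWithinAt
  have hfc : ContDiffOn ℝ ω f univ :=
    (contDiff_const.mul ((contDiff_norm_sq ℝ).add contDiff_const)).contDiffOn
  have hmaps : MapsTo f univ (Ioi 0) := fun x _ =>
    mul_pos (div_pos one_pos hT0) (add_pos_of_nonneg_of_pos (by positivity) (by positivity))
  have hC : ∀ i, i ≤ k → ‖iteratedFDerivWithin ℝ i g (Ioi 0) (f lam)‖ ≤
      CN * K * T ^ (-(β / 2) + (k : ℝ) * (α / 2)) := by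
    intro i hik
    rw [hflam]
    have hsplit : T ^ (-(β / 2) + (i : ℝ) * (α / 2)) =
        T ^ (-(β / 2) + (k : ℝ) * (α / 2)) * T ^ (((i : ℝ) - k) * (α / 2)) := by
      rw [← Real.rpow_add hT0]; ring_nf
    have ha1 : ((i : ℝ) - k) * (α / 2) ≤ 0 :=
      mul_nonpos_iff.mpr (Or.inr ⟨sub_nonpos.mpr (Nat.cast_le.mpr hik), hq.le⟩)
    have ha2 : -(N : ℝ) * (α / 2) ≤ ((i : ℝ) - k) * (α / 2) := by
      apply mul_le_mul_of_nonneg_right _ hq.le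
      have h1 : (k : ℝ) ≤ N := Nat.cast_le.mpr hk
      have h2 : (0 : ℝ) ≤ i := Nat.cast_nonneg i
      linarith
    have hTa : T ^ (((i : ℝ) - k) * (α / 2)) ≤ K := by
      rcases le_or_gt 1 T with h1 | h1
      · exact le_trans (Real.rpow_le_one_of_one_le_of_nonpos h1 ha1) hK1
      · have hr21 : r ^ 2 ≤ 1 := le_trans hrT h1.le
        refine le_trans (Real.rpow_le_rpow_of_nonpos hr2 hrT ha1) ?_
        exact le_trans (Real.rpow_le_rpow_of_exponent_ge hr2 hr21 ha2) (le_max_right _ _)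
    calc ‖iteratedFDerivWithin ℝ i g (Ioi 0) 1‖
        ≤ Cf i * T ^ (-(β / 2) + (i : ℝ) * (α / 2)) := by rw [hg]; exact hCfbd i T hrT
      _ = (Cf i * T ^ (((i : ℝ) - k) * (α / 2))) * T ^ (-(β / 2) + (k : ℝ) * (α / 2)) := by
          rw [hsplit]; ring
      _ ≤ (CN * K) * T ^ (-(β / 2) + (k : ℝ) * (α / 2)) := by
          refine mul_le_mul_of_nonneg_right ?_ (Real.rpow_nonneg hT0.le _)
          exact mul_le_mul (hCf_le i (le_trans hik hk)) hTa
            (Real.rpow_nonneg hT0.le _) hCNpos.le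
  have hlam2 : ‖lam‖ ^ 2 ≤ T := by rw [hTdef]; exact le_add_of_nonneg_right (by positivity)
  have hlamle : ‖lam‖ ≤ T ^ ((1 : ℝ) / 2) := by
    have h1 : (‖lam‖ ^ (2 : ℕ)) ^ ((1 : ℝ) / 2) = ‖lam‖ := by
      rw [← Real.rpow_natCast ‖lam‖ 2, ← Real.rpow_mul (norm_nonneg lam)]
      norm_num
    rw [← h1]
    exact Real.rpow_le_rpow (by positivity) hlam2 (by norm_num)
  have hDbd : ∀ i, 1 ≤ i → i ≤ k →
      ‖iteratedFDerivWithin ℝ i f univ lam‖ ≤ (2 * T ^ (-(1 / 2 : ℝ))) ^ i := by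
    intro i h1 h2
    rw [iteratedFDerivWithin_univ, hfdef]
    have hDval : (0 : ℝ) < 2 * T ^ (-(1 / 2 : ℝ)) := by positivity
    match i, h1 with
    | 1, _ =>
        rw [OscAux.quad_iter_one T (r ^ 2) lam, pow_one,
          abs_of_pos (div_pos two_pos hT0)]
        calc 2 / T * ‖lam‖ ≤ 2 / T * T ^ ((1 : ℝ) / 2) := by
              exact mul_le_mul_of_nonneg_left hlamle (by positivity)
          _ = 2 * T ^ (-(1 / 2 : ℝ)) := by
              rw [show -(1 / 2 : ℝ) = 1 / 2 - 1 by norm_num, Real.rpow_sub hT0, Real.rpow_one]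
              ring
    | 2, _ =>
        refine le_trans (OscAux.quad_iter_two T (r ^ 2) hT0 lam) ?_
        have hsq : (2 * T ^ (-(1 / 2 : ℝ))) ^ 2 = 4 * T⁻¹ := by
          rw [mul_pow, ← Real.rpow_natCast (T ^ (-(1 / 2 : ℝ))) 2, ← Real.rpow_mul hT0.le]
          norm_num [Real.rpow_neg_one]
        rw [hsq, div_eq_mul_inv]
        have hTi : (0 : ℝ) ≤ T⁻¹ := by positivity
        nlinarith
    | (j + 3), _ =>
        rw [OscAux.quad_iter_ge3 T (r ^ 2) j lam]
        positivity
  have hmain := norm_iteratedFDerivWithin_comp_le hgc hfc (le_top)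
    isOpen_Ioi.uniqueDiffOn uniqueDiffOn_univ hmaps (mem_univ lam) hC hDbd
  rw [iteratedFDerivWithin_univ, hcomp] at hmain
  refine le_trans hmain ?_
  have hDk : (2 * T ^ (-(1 / 2 : ℝ))) ^ k = 2 ^ k * T ^ (-(1 / 2 : ℝ) * k) := by
    rw [mul_pow, ← Real.rpow_natCast (T ^ (-(1 / 2 : ℝ))) k, ← Real.rpow_mul hT0.le]
  have hTT : T ^ (-(β / 2) + (k : ℝ) * (α / 2)) * T ^ (-(1 / 2 : ℝ) * k)
      = T ^ (-(β / 2) + (k : ℝ) * (α / 2) + -(1 / 2 : ℝ) * k) := by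
    rw [← Real.rpow_add hT0]
  have he : -(β / 2) + (k : ℝ) * (α / 2) + -(1 / 2 : ℝ) * k ≤ 0 := by
    have h1 : (0 : ℝ) ≤ k := Nat.cast_nonneg k
    nlinarith
  have hTlow : c0 * (1 + ‖lam‖) ^ 2 ≤ T := by
    rw [hTdef, hc0]
    have h1 := min_le_left 1 (r ^ 2)
    have h2 := min_le_right 1 (r ^ 2)
    have h3 : (0 : ℝ) < min 1 (r ^ 2) := lt_min one_pos hr2
    nlinarith [norm_nonneg lam, sq_nonneg (1 - ‖lam‖)]
  have hTe : T ^ (-(β / 2) + (k : ℝ) * (α / 2) + -(1 / 2 : ℝ) * k)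
      ≤ c0 ^ (-(β / 2) + (k : ℝ) * (α / 2) + -(1 / 2 : ℝ) * k)
        * (1 + ‖lam‖) ^ (-β - k * (1 - α)) := by
    have h1 : T ^ (-(β / 2) + (k : ℝ) * (α / 2) + -(1 / 2 : ℝ) * k)
        ≤ (c0 * (1 + ‖lam‖) ^ 2) ^ (-(β / 2) + (k : ℝ) * (α / 2) + -(1 / 2 : ℝ) * k) :=
      Real.rpow_le_rpow_of_nonpos (by positivity) hTlow he
    rw [Real.mul_rpow hc0pos.le (by positivity)] at h1
    refine h1.trans_eq ?_
    congr 1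
    rw [← Real.rpow_natCast (1 + ‖lam‖) 2, ← Real.rpow_mul (by positivity)]
    congr 1
    push_cast
    ring
  calc (k.factorial : ℝ) * (CN * K * T ^ (-(β / 2) + (k : ℝ) * (α / 2)))
        * (2 * T ^ (-(1 / 2 : ℝ))) ^ k
      = ((k.factorial : ℝ) * CN * K * 2 ^ k)
        * T ^ (-(β / 2) + (k : ℝ) * (α / 2) + -(1 / 2 : ℝ) * k) := by
        rw [hDk, ← hTT]; ring
    _ ≤ ((k.factorial : ℝ) * CN * K * 2 ^ k) *
        (c0 ^ (-(β / 2) + (k : ℝ) * (α / 2) + -(1 / 2 : ℝ) * k)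
          * (1 + ‖lam‖) ^ (-β - k * (1 - α))) := by
        refine mul_le_mul_of_nonneg_left hTe ?_
        have h1 : (0 : ℝ) < (k.factorial : ℝ) := Nat.cast_pos.mpr k.factorial_pos
        positivity
    _ = cf k * (1 + ‖lam‖) ^ (-β - k * (1 - α)) := by rw [hcf]; ring
    _ ≤ (∑ j ∈ Finset.range (N + 1), cf j) * (1 + ‖lam‖) ^ (-β - k * (1 - α)) := by
        refine mul_le_mul_of_nonneg_right ?_ (Real.rpow_nonneg (by positivity) _)
        exact Finset.single_le_sum (fun j _ => (hcfpos j).le)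
          (Finset.mem_range.mpr (Nat.lt_succ_of_le hk))
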